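/- Security for Bob over a binary erasure channel: fix n ≥ 1, k ≥ 1 and p ∈ (0,1). Let E = (E₁,…,Eₙ) be i.i.d. Bernoulli(p) random variables (Eᵢ = 1 meaning position i is erased), and let Z be uniform on {0,1} and independent of E. Condition on the event 𝒜 that |{i : Eᵢ = 1}| ≥ k and |{i : Eᵢ = 0}| ≥ k. Given (Z, E) on 𝒜, let S_Z be uniformly distributed over the k-element subsets of {i : Eᵢ = 0} and let S_{1−Z} be uniformly distributed over the k-element subsets of {i : Eᵢ = 1}, with S_Z and S_{1−Z} conditionally independent given (Z, E). Then, under the probability measure conditioned on 𝒜, the pair (S₀, S₁) is independent of Z; equivalently, I(Z; (S₀, S₁)) = 0. -/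

import Mathlib

/-!
Conditioned on `𝒜`, the law of `(Z, E)` is `Q (#ones e) (#zeros e)` for both values of `z`.
Given `Z = 0` the announced pair `(S₀, S₁) = (a, b)` has weight
`∑ₑ Q · U(zeros e)(a) · U(ones e)(b)`, given `Z = 1` the same sum with `a` and `b` exchanged,
where `U s` is the uniform law on the `k`-subsets of `s`. Flipping `e` on `a ∪ b` matches the two
sums term by term: it exchanges "`a` unerased, `b` erased" with "`a` erased, `b` unerased" and,
when `#a = #b`, keeps the number of erasures. So the joint law of `Z` and `(S₀, S₁)` does not
depend on `Z`, which forces independence.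
-/

open scoped BigOperators Classical

noncomputable section

namespace OT

variable {Ω : Type*} [Fintype Ω]

/-- Probability of an event under a pmf on a finite sample space. -/
def pr (μ : Ω → ℝ) (s : Set Ω) : ℝ := ∑ ω, s.indicator μ ω

/-- `q` is a probability mass function on a finite type. -/
def isDist {α : Type*} [Fintype α] (q : α → ℝ) : Prop := (∀ a, 0 ≤ q a) ∧ ∑ a, q a = 1

/-- Distribution (pmf) of a random variable. -/
def dst {α : Type*} (μ : Ω → ℝ) (X : Ω → α) : α → ℝ := fun a => pr μ {ω | X ω = a}

/-- Joint distribution of two random variables. -/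
def jd {α β : Type*} (μ : Ω → ℝ) (X : Ω → α) (Y : Ω → β) : α × β → ℝ :=
  fun q => pr μ {ω | X ω = q.1 ∧ Y ω = q.2}

/-- Conditional pmf given an event. -/
def cnd (μ : Ω → ℝ) (s : Set Ω) : Ω → ℝ := fun ω => s.indicator μ ω / pr μ s

/-- Shannon entropy (in bits) of a pmf on a finite type. -/
def entD {α : Type*} [Fintype α] (q : α → ℝ) : ℝ := ∑ a, -(q a * Real.logb 2 (q a))

/-- Shannon entropy (in bits) of a random variable. -/
def ent {α : Type*} [Fintype α] (μ : Ω → ℝ) (X : Ω → α) : ℝ := entD (dst μ X)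

/-- Conditional Shannon entropy `H(X|Y)` (in bits). -/
def condEnt {α β : Type*} [Fintype α] [Fintype β] (μ : Ω → ℝ) (X : Ω → α) (Y : Ω → β) : ℝ :=
  ent μ (fun ω => (X ω, Y ω)) - ent μ Y

/-- Mutual information `I(X;Y)` (in bits). -/
def mi {α β : Type*} [Fintype α] [Fintype β] (μ : Ω → ℝ) (X : Ω → α) (Y : Ω → β) : ℝ :=
  ent μ X + ent μ Y - ent μ (fun ω => (X ω, Y ω))

/-- Conditional mutual information `I(X;Y|Z)` (in bits). -/
def cmi {α β γ : Type*} [Fintype α] [Fintype β] [Fintype γ]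
    (μ : Ω → ℝ) (X : Ω → α) (Y : Ω → β) (Z : Ω → γ) : ℝ :=
  ent μ (fun ω => (X ω, Z ω)) + ent μ (fun ω => (Y ω, Z ω))
    - ent μ (fun ω => (X ω, Y ω, Z ω)) - ent μ Z

/-- Rényi entropy of order two (in bits). -/
def ren2 {α : Type*} [Fintype α] (μ : Ω → ℝ) (X : Ω → α) : ℝ :=
  Real.logb 2 (1 / ∑ a, (dst μ X a) ^ 2)

/-- Statistical (total variation) distance between two pmfs. -/
def sd {α : Type*} [Fintype α] (q q' : α → ℝ) : ℝ := (∑ a, |q a - q' a|) / 2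

/-- Conditional min-entropy `H∞(X|Y)` of a joint pmf (in bits):
the minimum over `(a,b)` in the support of `log₂ (P(Y=b) / P(X=a, Y=b))`. -/
def minEnt {α β : Type*} [Fintype α] [Fintype β] (q : α × β → ℝ) : ℝ :=
  sInf {r | ∃ a b, 0 < q (a, b) ∧ r = Real.logb 2 ((∑ a', q (a', b)) / q (a, b))}

/-- `ε`-smooth conditional min-entropy of a joint pmf (in bits). -/
def sminEnt {α β : Type*} [Fintype α] [Fintype β] (q : α × β → ℝ) (ε : ℝ) : ℝ :=
  sSup {r | ∃ q' : α × β → ℝ, isDist q' ∧ sd q q' ≤ ε ∧ r = minEnt q'}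

/-- Conditional zero-entropy `H₀(X|Y)` of a joint pmf (in bits). -/
def zeroEnt {α β : Type*} [Fintype α] [Fintype β] (q : α × β → ℝ) : ℝ :=
  sSup {r | ∃ b, 0 < ∑ a, q (a, b) ∧
    r = Real.logb 2 ((Finset.univ.filter fun a => 0 < q (a, b)).card)}

end OT

open OT

namespace OT

open Finset Real

section Pmf

variable {Ω : Type*} [Fintype Ω]

lemma pr_eq_sum_ite (μ : Ω → ℝ) (s : Set Ω) : pr μ s = ∑ ω, if ω ∈ s then μ ω else 0 :=
  sum_congr rfl fun ω _ => Set.indicator_apply s μ ω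

lemma pr_nonneg {μ : Ω → ℝ} (hμ : ∀ ω, 0 ≤ μ ω) (s : Set Ω) : 0 ≤ pr μ s :=
  sum_nonneg fun ω _ => Set.indicator_nonneg (fun ω _ => hμ ω) ω

lemma pr_mono {μ : Ω → ℝ} (hμ : ∀ ω, 0 ≤ μ ω) {s t : Set Ω} (hst : s ⊆ t) :
    pr μ s ≤ pr μ t :=
  sum_le_sum fun ω _ => Set.indicator_le_indicator_of_subset hst hμ ω

lemma pr_cnd (μ : Ω → ℝ) (s t : Set Ω) : pr (cnd μ s) t = pr μ (t ∩ s) / pr μ s := by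
  simp only [pr_eq_sum_ite, sum_div, cnd, Set.indicator_apply, Set.mem_inter_iff]
  refine sum_congr rfl fun ω _ => ?_
  split_ifs <;> simp_all

lemma pr_eq_mul_of_subset_of_pos {μ : Ω → ℝ} (hμ : ∀ ω, 0 ≤ μ ω) {s t : Set Ω} (hst : s ⊆ t)
    {c : ℝ} (h : 0 < pr μ t → pr μ s = pr μ t * c) : pr μ s = pr μ t * c := by
  rcases (pr_nonneg hμ t).lt_or_eq with ht | ht
  · exact h ht
  · rw [← ht, zero_mul]
    exact le_antisymm (ht ▸ pr_mono hμ hst) (pr_nonneg hμ s)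

lemma isDist_cnd {μ : Ω → ℝ} (hμ : ∀ ω, 0 ≤ μ ω) {s : Set Ω} (hs : 0 < pr μ s) :
    isDist (cnd μ s) := by
  refine ⟨fun ω => div_nonneg (Set.indicator_nonneg (fun ω _ => hμ ω) ω) hs.le, ?_⟩
  have h := pr_cnd μ s Set.univ
  rw [Set.univ_inter, div_self hs.ne'] at h
  simpa [pr] using h

lemma pr_eq_sum_pr_inter_fiber {β : Type*} [Fintype β] (μ : Ω → ℝ) (s : Set Ω) (Y : Ω → β) :
    pr μ s = ∑ y, pr μ {ω | ω ∈ s ∧ Y ω = y} := by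
  simp only [pr_eq_sum_ite]
  rw [sum_comm]
  refine sum_congr rfl fun ω _ => ?_
  by_cases hω : ω ∈ s <;> simp [hω]

lemma sum_dst {α : Type*} [Fintype α] {μ : Ω → ℝ} (hμ : isDist μ) (X : Ω → α) :
    ∑ a, dst μ X a = 1 := by
  have h := pr_eq_sum_pr_inter_fiber μ Set.univ X
  simp only [Set.mem_univ, true_and] at h
  rw [← hμ.2]
  simpa [dst, pr] using h.symm

lemma dst_eq_sum_jd_left {α β : Type*} [Fintype β] (μ : Ω → ℝ) (X : Ω → α) (Y : Ω → β) (x : α) :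
    dst μ X x = ∑ y, jd μ X Y (x, y) :=
  pr_eq_sum_pr_inter_fiber μ _ Y

lemma dst_eq_sum_jd_right {α β : Type*} [Fintype α] (μ : Ω → ℝ) (X : Ω → α) (Y : Ω → β) (y : β) :
    dst μ Y y = ∑ x, jd μ X Y (x, y) := by
  rw [dst, pr_eq_sum_pr_inter_fiber μ _ X]
  simp only [jd, Set.mem_ofPred_eq, and_comm]

lemma jd_cnd_of_eq_setOf {α β : Type*} (μ : Ω → ℝ) (X : Ω → α) (Y : Ω → β) {A : Set Ω}
    {G : β → Prop} [DecidablePred G] (hA : A = {ω | G (Y ω)}) (x : α) (y : β) :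
    jd (cnd μ A) X Y (x, y) = if G y then jd μ X Y (x, y) / pr μ A else 0 := by
  rw [jd, pr_cnd]
  split_ifs with hy
  · congr 2
    ext ω
    simp +contextual [hA, hy]
  · have h : {ω | X ω = x ∧ Y ω = y} ∩ A = ∅ := by
      rw [Set.eq_empty_iff_forall_notMem, hA]
      rintro ω ⟨⟨-, rfl⟩, hω⟩
      exact hy hω
    simp [h, pr]

lemma dst_prod_eq_jd {α β : Type*} (μ : Ω → ℝ) (X : Ω → α) (Y : Ω → β) :
    dst μ (fun ω => (X ω, Y ω)) = jd μ X Y := by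
  ext ⟨x, y⟩
  simp [dst, jd]

end Pmf

section Entropy

variable {Ω : Type*} [Fintype Ω]

lemma entD_eq_sum_negMulLog {α : Type*} [Fintype α] (q : α → ℝ) :
    entD q = (∑ a, negMulLog (q a)) / log 2 := by
  simp only [entD, negMulLog, logb, sum_div]
  exact sum_congr rfl fun a _ => by ring

lemma entD_mul {α β : Type*} [Fintype α] [Fintype β] {q : α → ℝ} {r : β → ℝ}
    (hq : ∑ a, q a = 1) (hr : ∑ b, r b = 1) :
    entD (fun x : α × β => q x.1 * r x.2) = entD q + entD r := by
  simp only [entD_eq_sum_negMulLog, ← add_div, Fintype.sum_prod_type, negMulLog_mul,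
    sum_add_distrib, ← mul_sum, ← sum_mul, hq, hr, one_mul]

lemma mi_eq_zero_of_jd_eq_mul {α β : Type*} [Fintype α] [Fintype β] {μ : Ω → ℝ}
    (hμ : isDist μ) {X : Ω → α} {Y : Ω → β}
    (h : ∀ x y, jd μ X Y (x, y) = dst μ X x * dst μ Y y) : mi μ X Y = 0 := by
  have hXY : dst μ (fun ω => (X ω, Y ω)) = fun xy => dst μ X xy.1 * dst μ Y xy.2 := by
    rw [dst_prod_eq_jd]
    exact funext fun xy => h xy.1 xy.2
  unfold mi ent
  rw [hXY, entD_mul (sum_dst hμ X) (sum_dst hμ Y)]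
  ring

lemma mi_eq_zero_of_jd_const_left {α β : Type*} [Fintype α] [Fintype β] {μ : Ω → ℝ}
    (hμ : isDist μ) {X : Ω → α} {Y : Ω → β} {f : β → ℝ}
    (h : ∀ x y, jd μ X Y (x, y) = f y) : mi μ X Y = 0 := by
  refine mi_eq_zero_of_jd_eq_mul hμ fun x y => ?_
  have hX : ∀ x', dst μ X x' = ∑ y, f y := fun x' => by
    simp only [dst_eq_sum_jd_left μ X Y, h]
  have hX' : Fintype.card α * dst μ X x = 1 := by
    have := sum_dst hμ X
    simpa only [hX, sum_const, card_univ, nsmul_eq_mul] using this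
  have hY : dst μ Y y = Fintype.card α * f y := by
    simp [dst_eq_sum_jd_right μ X Y, h]
  rw [h, hY, ← mul_assoc, mul_comm _ (Fintype.card α : ℝ), hX', one_mul]

end Entropy

section Erasure

variable {ι : Type*}

def flipOn [DecidableEq ι] (s : Finset ι) (e : ι → Bool) : ι → Bool :=
  fun i => if i ∈ s then !e i else e i

lemma flipOn_involutive [DecidableEq ι] (s : Finset ι) : Function.Involutive (flipOn s) :=
  fun e => funext fun i => by by_cases h : i ∈ s <;> simp [flipOn, h]

variable [Fintype ι]

def ones (e : ι → Bool) : Finset ι := univ.filter fun i => e i = true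

def zeros (e : ι → Bool) : Finset ι := univ.filter fun i => e i = false

lemma card_ones_add_card_zeros (e : ι → Bool) : #(ones e) + #(zeros e) = Fintype.card ι := by
  simpa [ones, zeros] using card_filter_add_card_filter_not (s := univ) fun i => e i = true

lemma disjoint_ones_zeros (e : ι → Bool) : Disjoint (ones e) (zeros e) :=
  disjoint_filter.mpr fun i _ h => by simp [h]

lemma prod_ite_eq_pow_mul_pow {M : Type*} [CommMonoid M] (e : ι → Bool) (x y : M) :
    ∏ i, (if e i then x else y) = x ^ #(ones e) * y ^ #(zeros e) := by
  rw [prod_ite, prod_const, prod_const]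
  simp [ones, zeros]

variable [DecidableEq ι] {s a b : Finset ι} {e : ι → Bool}

lemma subset_ones_flipOn_iff (h : a ⊆ s) : a ⊆ ones (flipOn s e) ↔ a ⊆ zeros e := by
  simp only [subset_iff, ones, zeros, mem_filter, mem_univ, true_and]
  exact forall₂_congr fun i hi => by simp [flipOn, h hi]

lemma subset_zeros_flipOn_iff (h : a ⊆ s) : a ⊆ zeros (flipOn s e) ↔ a ⊆ ones e := by
  simp only [subset_iff, ones, zeros, mem_filter, mem_univ, true_and]
  exact forall₂_congr fun i hi => by simp [flipOn, h hi]

lemma ones_flipOn_union (ha : a ⊆ zeros e) (hb : b ⊆ ones e) :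
    ones (flipOn (a ∪ b) e) = ones e \ b ∪ a := by
  ext i
  have hai : i ∈ a → e i = false := fun hi => (mem_filter.mp (ha hi)).2
  have hbi : i ∈ b → e i = true := fun hi => (mem_filter.mp (hb hi)).2
  by_cases hia : i ∈ a <;> by_cases hib : i ∈ b <;> simp_all [ones, flipOn]

lemma card_ones_flipOn_union (ha : a ⊆ zeros e) (hb : b ⊆ ones e) (hab : #a = #b) :
    #(ones (flipOn (a ∪ b) e)) = #(ones e) := by
  have hdisj : Disjoint (ones e \ b) a := (disjoint_ones_zeros e).mono sdiff_subset ha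
  rw [ones_flipOn_union ha hb, card_union_of_disjoint hdisj, card_sdiff_of_subset hb, hab,
    Nat.sub_add_cancel (card_le_card hb)]

lemma card_zeros_flipOn_union (ha : a ⊆ zeros e) (hb : b ⊆ ones e) (hab : #a = #b) :
    #(zeros (flipOn (a ∪ b) e)) = #(zeros e) := by
  have := card_ones_add_card_zeros (flipOn (a ∪ b) e)
  have := card_ones_add_card_zeros e
  have := card_ones_flipOn_union ha hb hab
  omega

end Erasure

section Announcement

variable {ι : Type*} [DecidableEq ι]

def uniformPowersetCard (k : ℕ) (s : Finset ι) (a : Finset ι) : ℝ :=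
  if a ∈ powersetCard k s then 1 / #(powersetCard k s) else 0

lemma uniformPowersetCard_congr {k : ℕ} {s s' a a' : Finset ι} (h : a ⊆ s ↔ a' ⊆ s')
    (ha : #a = #a') (hs : #s = #s') :
    uniformPowersetCard k s a = uniformPowersetCard k s' a' := by
  simp only [uniformPowersetCard, mem_powersetCard, card_powersetCard, h, ha, hs]

variable [Fintype ι]

lemma weight_mul_uniformPowersetCard_flipOn (Q : ℕ → ℕ → ℝ) (k : ℕ) (a b : Finset ι)
    (e : ι → Bool) :
    Q #(ones e) #(zeros e) * uniformPowersetCard k (zeros e) a * uniformPowersetCard k (ones e) b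
      = Q #(ones (flipOn (a ∪ b) e)) #(zeros (flipOn (a ∪ b) e))
          * uniformPowersetCard k (zeros (flipOn (a ∪ b) e)) b
          * uniformPowersetCard k (ones (flipOn (a ∪ b) e)) a := by
  set e' := flipOn (a ∪ b) e
  have hoa : a ⊆ ones e' ↔ a ⊆ zeros e := subset_ones_flipOn_iff subset_union_left
  have hzb : b ⊆ zeros e' ↔ b ⊆ ones e := subset_zeros_flipOn_iff subset_union_right
  by_cases h : a ⊆ zeros e ∧ b ⊆ ones e ∧ #a = #b
  · obtain ⟨ha, hb, hab⟩ := h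
    rw [card_ones_flipOn_union ha hb hab, card_zeros_flipOn_union ha hb hab,
      uniformPowersetCard_congr (iff_of_true ha (hzb.mpr hb)) hab
        (card_zeros_flipOn_union ha hb hab).symm,
      uniformPowersetCard_congr (iff_of_true hb (hoa.mpr ha)) hab.symm
        (card_ones_flipOn_union ha hb hab).symm]
  · -- each side needs `a ⊆ zeros e`, `b ⊆ ones e` and `#a = k = #b`, so both vanish
    simp only [uniformPowersetCard, mem_powersetCard, hoa, hzb]
    split_ifs <;> simp_all

lemma sum_weight_mul_uniformPowersetCard_comm (Q : ℕ → ℕ → ℝ) (k : ℕ) (a b : Finset ι) :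
    ∑ e : ι → Bool, Q #(ones e) #(zeros e) * uniformPowersetCard k (zeros e) a
        * uniformPowersetCard k (ones e) b
      = ∑ e : ι → Bool, Q #(ones e) #(zeros e) * uniformPowersetCard k (zeros e) b
        * uniformPowersetCard k (ones e) a :=
  Fintype.sum_bijective _ (flipOn_involutive (a ∪ b)).bijective _ _
    (weight_mul_uniformPowersetCard_flipOn Q k a b)

end Announcement

end OT

open Finset

theorem statement14_general {Ω : Type*} [Fintype Ω] (n k : ℕ) (p : ℝ)
    (μ : Ω → ℝ) (hμ : isDist μ)
    (E : Ω → Fin n → Bool) (Z : Ω → Bool) (SZ SB : Ω → Finset (Fin n))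
    (hE : ∀ e : Fin n → Bool, dst μ E e = ∏ i, (if e i then p else 1 - p))
    (hZE : ∀ z e, jd μ Z E (z, e) = (1 / 2) * dst μ E e)
    (𝒜 : Set Ω)
    (h𝒜 : 𝒜 = {ω | k ≤ (Finset.univ.filter fun i => E ω i = true).card ∧
                    k ≤ (Finset.univ.filter fun i => E ω i = false).card})
    (h𝒜pos : 0 < pr μ 𝒜)
    (hS : ∀ z e, 0 < jd (cnd μ 𝒜) Z E (z, e) →
      ∀ a b : Finset (Fin n),
        pr (cnd μ 𝒜) {ω | SZ ω = a ∧ SB ω = b ∧ Z ω = z ∧ E ω = e}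
          = jd (cnd μ 𝒜) Z E (z, e)
            * (if a ∈ Finset.powersetCard k (Finset.univ.filter fun i => e i = false)
                then (1 : ℝ) /
                  (Finset.powersetCard k (Finset.univ.filter fun i => e i = false)).card
                else 0)
            * (if b ∈ Finset.powersetCard k (Finset.univ.filter fun i => e i = true)
                then (1 : ℝ) /
                  (Finset.powersetCard k (Finset.univ.filter fun i => e i = true)).card
                else 0)) :
    mi (cnd μ 𝒜) Z
      (fun ω => (if Z ω then SB ω else SZ ω, if Z ω then SZ ω else SB ω)) = 0 := by
  set μ' := cnd μ 𝒜
  set W := fun ω => (if Z ω then SB ω else SZ ω, if Z ω then SZ ω else SB ω)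
  have hμ' : isDist μ' := isDist_cnd hμ.1 h𝒜pos
  set Q : ℕ → ℕ → ℝ := fun m m' =>
    if k ≤ m ∧ k ≤ m' then 1 / 2 * (p ^ m * (1 - p) ^ m') / pr μ 𝒜 else 0
  have hZE' : ∀ z e, jd μ' Z E (z, e) = Q #(ones e) #(zeros e) := fun z e => by
    rw [jd_cnd_of_eq_setOf μ Z E (G := fun e => k ≤ #(ones e) ∧ k ≤ #(zeros e)) h𝒜, hZE, hE,
      prod_ite_eq_pow_mul_pow]
  have hlaw : ∀ z e a b, pr μ' {ω | SZ ω = a ∧ SB ω = b ∧ Z ω = z ∧ E ω = e}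
      = Q #(ones e) #(zeros e) * uniformPowersetCard k (zeros e) a
        * uniformPowersetCard k (ones e) b := fun z e a b => by
    have hsub : {ω | SZ ω = a ∧ SB ω = b ∧ Z ω = z ∧ E ω = e} ⊆ {ω | Z ω = z ∧ E ω = e} :=
      fun ω hω => hω.2.2
    rw [← hZE' z e, mul_assoc]
    exact pr_eq_mul_of_subset_of_pos hμ'.1 hsub fun hpos =>
      (hS z e hpos a b).trans (mul_assoc _ _ _)
  have hjoint : ∀ z a b,
      jd μ' Z W (z, (a, b))
        = ∑ e, Q #(ones e) #(zeros e) * uniformPowersetCard k (zeros e) (if z then b else a)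
          * uniformPowersetCard k (ones e) (if z then a else b) := fun z a b => by
    rw [jd, pr_eq_sum_pr_inter_fiber μ' _ E]
    refine sum_congr rfl fun e _ => ?_
    rw [← hlaw z e]
    congr 1
    ext ω
    cases hz : Z ω <;> cases z <;> simp [W, hz, and_assoc, and_left_comm]
  refine mi_eq_zero_of_jd_const_left hμ' (f := fun y => jd μ' Z W (false, y)) ?_
  rintro (_ | _) ⟨a, b⟩
  · rfl
  · rw [hjoint, hjoint]
    exact sum_weight_mul_uniformPowersetCard_comm Q k b a

/-- security for Bob over a binary erasure channel: let `E` be an i.i.d.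
Bernoulli(p) erasure pattern, `Z` a uniform bit independent of `E`; condition on the
event `𝒜` that there are at least `k` erased and at least `k` non-erased positions;
given `(Z,E)` let `S_Z` be uniform over `k`-subsets of the non-erased positions and
`S_{1−Z}` uniform over `k`-subsets of the erased positions, conditionally independent
given `(Z,E)`.  Then, under the conditional measure given `𝒜`, the announced pair
`(S₀,S₁)` is independent of `Z`, i.e. `I(Z;(S₀,S₁)) = 0`. -/
theorem statement14 {Ω : Type*} [Fintype Ω] (n k : ℕ) (hn : 1 ≤ n) (hk : 1 ≤ k)
    (p : ℝ) (hp0 : 0 < p) (hp1 : p < 1)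
    (μ : Ω → ℝ) (hμ : isDist μ)
    (E : Ω → Fin n → Bool) (Z : Ω → Bool) (SZ SB : Ω → Finset (Fin n))
    (hE : ∀ e : Fin n → Bool, dst μ E e = ∏ i, (if e i then p else 1 - p))
    (hZE : ∀ z e, jd μ Z E (z, e) = (1 / 2) * dst μ E e)
    (𝒜 : Set Ω)
    (h𝒜 : 𝒜 = {ω | k ≤ (Finset.univ.filter fun i => E ω i = true).card ∧
                    k ≤ (Finset.univ.filter fun i => E ω i = false).card})
    (h𝒜pos : 0 < pr μ 𝒜)
    (hS : ∀ z e, 0 < jd (cnd μ 𝒜) Z E (z, e) →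
      ∀ a b : Finset (Fin n),
        pr (cnd μ 𝒜) {ω | SZ ω = a ∧ SB ω = b ∧ Z ω = z ∧ E ω = e}
          = jd (cnd μ 𝒜) Z E (z, e)
            * (if a ∈ Finset.powersetCard k (Finset.univ.filter fun i => e i = false)
                then (1 : ℝ) /
                  (Finset.powersetCard k (Finset.univ.filter fun i => e i = false)).card
                else 0)
            * (if b ∈ Finset.powersetCard k (Finset.univ.filter fun i => e i = true)
                then (1 : ℝ) /
                  (Finset.powersetCard k (Finset.univ.filter fun i => e i = true)).card
                else 0)) :
    mi (cnd μ 𝒜) Z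
      (fun ω => (if Z ω then SB ω else SZ ω, if Z ω then SZ ω else SB ω)) = 0 :=
  statement14_general n k p μ hμ E Z SZ SB hE hZE 𝒜 h𝒜 h𝒜pos hS
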